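/- arXiv:2004.05644 — 2 statements merged into one kernel-verified Lean document; each statement's English description precedes it below -/
import Mathlib

section
/- For positive integers m and N with N not dividing m, ∫_0^1 ({yN} − 1/2)·sin(πym)·cos(πym) dy = 0; and if N divides m, the integral equals −N/(4πm). -/
/-!
Since `sin θ cos θ = sin (2θ) / 2`, the integral is half of `∫₀¹ φ(Ny) sin(2πmy) dy` for the
1-periodic sawtooth `φ t = {t} - 1/2`. Substituting `t = Ny` and cutting `[0, N]` into unit
intervals, periodicity of `φ` turns this into `N⁻¹ ∫₀¹ φ(t) ∑_{j<N} sin(2πm(t + j)/N) dt`. The inner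
sum is the imaginary part of a sum of `N`-th roots of unity: it vanishes unless `N ∣ m`, and is
`N sin(2πmt/N)` otherwise. For `m = kN` what is left is `∫₀¹ (t - 1/2) sin(2πkt) dt = -1/(2πk)`.
-/

open Real Finset Set MeasureTheory
open Complex (I)

theorem sum_range_exp_two_pi_I_div_pow_mul (m N : ℕ) (hN : N ≠ 0) :
    ∑ j ∈ range N, Complex.exp (2 * π * I / N) ^ (m * j) = if N ∣ m then (N : ℂ) else 0 := by
  have hζ := Complex.isPrimitiveRoot_exp N hN
  simp_rw [pow_mul]
  split_ifs with h
  · simp [(hζ.pow_eq_one_iff_dvd m).2 h]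
  · rw [geom_sum_eq (mt (hζ.pow_eq_one_iff_dvd m).1 h), ← pow_mul, mul_comm m N, pow_mul,
      hζ.pow_eq_one, one_pow, sub_self, zero_div]

theorem sum_range_sin_add_two_pi_mul_div (x : ℝ) (m N : ℕ) (hN : N ≠ 0) :
    ∑ j ∈ range N, sin (x + 2 * π * m * j / N) = if N ∣ m then N * sin x else 0 := by
  have h_im (j : ℕ) : sin (x + 2 * π * m * j / N) =
      (Complex.exp (2 * π * I / N) ^ (m * j) * Complex.exp (x * I)).im := by
    rw [← Complex.exp_nat_mul, ← Complex.exp_add, ← Complex.exp_ofReal_mul_I_im]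
    push_cast
    ring_nf
  simp_rw [h_im, ← Complex.im_sum, ← sum_mul, sum_range_exp_two_pi_I_div_pow_mul m N hN]
  split_ifs
  · simp [Complex.exp_ofReal_mul_I_im]
  · simp

theorem Function.Periodic.integral_comp_mul_mul_sin {φ : ℝ → ℝ} (hφ : Function.Periodic φ 1)
    (hφi : IntervalIntegrable φ volume 0 1) (m N : ℕ) (hN : N ≠ 0) :
    ∫ y in (0:ℝ)..1, φ (y * N) * sin (2 * π * m * y) =
      if N ∣ m then ∫ t in (0:ℝ)..1, φ t * sin (2 * π * m * t / N) else 0 := by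
  have hNR : (N : ℝ) ≠ 0 := Nat.cast_ne_zero.2 hN
  have hint (a b : ℝ) (s : ℝ → ℝ) (hs : Continuous s) :
      IntervalIntegrable (fun t => φ t * s t) volume a b :=
    (hφ.intervalIntegrable₀ one_ne_zero hφi a b).mul_continuousOn hs.continuousOn
  have hshift (j : ℕ) : ∫ t in (j : ℝ)..((j + 1 : ℕ) : ℝ), φ t * sin (2 * π * m * t / N) =
      ∫ t in (0:ℝ)..1, φ t * sin (2 * π * m * t / N + 2 * π * m * j / N) := by
    rw [← zero_add (j : ℝ), Nat.cast_succ, add_comm (j : ℝ) 1,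
      ← intervalIntegral.integral_comp_add_right]
    congr 1 with t
    rw [show φ (t + j) = φ t by simpa using hφ.nat_mul j t]
    ring_nf
  calc ∫ y in (0:ℝ)..1, φ (y * N) * sin (2 * π * m * y)
      = (N : ℝ)⁻¹ * ∫ t in (0:ℝ)..N, φ t * sin (2 * π * m * t / N) := by
        have h := intervalIntegral.integral_comp_mul_right
          (fun t => φ t * sin (2 * π * m * t / N)) hNR (a := 0) (b := 1)
        simp only [zero_mul, one_mul, smul_eq_mul] at h
        rw [← h]
        congr! 3 with y
        field_simp
    _ = (N : ℝ)⁻¹ * ∑ j ∈ range N,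
          ∫ t in (0:ℝ)..1, φ t * sin (2 * π * m * t / N + 2 * π * m * j / N) := by
        simp_rw [← hshift]
        rw [intervalIntegral.sum_integral_adjacent_intervals (fun _ _ => hint _ _ _ (by fun_prop)),
          Nat.cast_zero]
    _ = (N : ℝ)⁻¹ * ∫ t in (0:ℝ)..1,
          φ t * ∑ j ∈ range N, sin (2 * π * m * t / N + 2 * π * m * j / N) := by
        congr 1
        simp_rw [mul_sum]
        rw [intervalIntegral.integral_finsetSum (fun _ _ => hint _ _ _ (by fun_prop))]
    _ = _ := by
        simp_rw [sum_range_sin_add_two_pi_mul_div _ m N hN, mul_ite, mul_zero]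
        split_ifs
        · rw [← intervalIntegral.integral_const_mul]
          congr! 2 with t
          field_simp
        · simp

theorem integral_fract_sub_half_mul_sin_two_pi_mul (k : ℕ) (hk : k ≠ 0) :
    ∫ t in (0:ℝ)..1, (Int.fract t - 1 / 2) * sin (2 * π * k * t) = -1 / (2 * π * k) := by
  set c := 2 * π * k with hc_def
  have hc : c ≠ 0 := by positivity
  have hfract : EqOn (fun t => (Int.fract t - 1 / 2) * sin (c * t))
      (fun t => (t - 1 / 2) * sin (c * t)) (Ioo 0 1) := fun t ht => by
    simp only [Int.fract_eq_self.2 ⟨ht.1.le, ht.2⟩]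
  have hderiv (t : ℝ) : HasDerivAt (fun t => (1 / 2 - t) * cos (c * t) / c + sin (c * t) / c ^ 2)
      ((t - 1 / 2) * sin (c * t)) t := by
    have hct : HasDerivAt (fun t => c * t) c t := by simpa using (hasDerivAt_id' t).const_mul c
    refine (((((hasDerivAt_id' t).const_sub (1 / 2)).mul hct.cos).div_const c).add
      (hct.sin.div_const (c ^ 2))).congr_deriv ?_
    field_simp
    ring
  rw [intervalIntegral.integral_congr_Ioo_of_le zero_le_one hfract,
    intervalIntegral.integral_eq_sub_of_hasDerivAt (fun t _ => hderiv t)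
      (Continuous.intervalIntegrable (by fun_prop) _ _)]
  have hcos : cos (c * 1) = 1 := by
    rw [show c * 1 = k * (2 * π) by ring]
    exact cos_nat_mul_two_pi k
  have hsin : sin (c * 1) = 0 := by
    rw [show c * 1 = (2 * k : ℕ) * π by push_cast; ring]
    exact sin_nat_mul_pi _
  simp only [hcos, hsin, mul_zero, cos_zero, sin_zero]
  field_simp
  ring

theorem fract_sin_cos_integral (m N : ℕ) (hm : 0 < m) (hN : 0 < N) :
    ∫ y in (0:ℝ)..1,
        (Int.fract (y * N) - 1 / 2) * Real.sin (Real.pi * y * m) * Real.cos (Real.pi * y * m) =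
      if N ∣ m then -(N : ℝ) / (4 * Real.pi * m) else 0 := by
  have hφ : Function.Periodic (fun t : ℝ => Int.fract t - 1 / 2) 1 := fun t => by
    simp only [Int.fract_add_one]
  have hφi : IntervalIntegrable (fun t : ℝ => Int.fract t - 1 / 2) volume 0 1 := by
    have hlin : Continuous fun t : ℝ => t - 1 / 2 := by fun_prop
    refine (hlin.intervalIntegrable 0 1).congr_uIoo ?_
    rw [uIoo_of_le zero_le_one]
    exact fun t ht => by simp only [Int.fract_eq_self.2 ⟨ht.1.le, ht.2⟩]
  have hsin_two_mul (y : ℝ) : (Int.fract (y * N) - 1 / 2) * sin (π * y * m) * cos (π * y * m) =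
      1 / 2 * ((Int.fract (y * N) - 1 / 2) * sin (2 * π * m * y)) := by
    rw [show 2 * π * m * y = 2 * (π * y * m) by ring, sin_two_mul]
    ring
  simp_rw [hsin_two_mul]
  rw [intervalIntegral.integral_const_mul, hφ.integral_comp_mul_mul_sin hφi m N hN.ne']
  split_ifs with hdvd
  · obtain ⟨k, rfl⟩ := hdvd
    have hk : k ≠ 0 := by rintro rfl; simp at hm
    have hN' : (N : ℝ) ≠ 0 := by positivity
    have harg (t : ℝ) : 2 * π * (N * k : ℕ) * t / N = 2 * π * k * t := by
      push_cast; field_simp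
    simp_rw [harg]
    rw [integral_fract_sub_half_mul_sin_two_pi_mul k hk]
    push_cast
    field_simp
    ring
  · simp
end

section
/- Let f be completely multiplicative with f(m) = 1 for a fixed integer m > 1, l > 1 an integer, and χ(n) = −(m^l − 1) if m | n, χ(n) = 1 otherwise. Assume ∑_{n≥1} |f(n)|/n^l < ∞. Then for every positive integer N coprime to m, ∑_{k=1}^{N} ∑_{n≥1} (χ(n)f(n)/n^l)·cos(2πnk/N) = 0. -/
/-!
Summing over `k` first turns the double sum into `∑ χ(n) g(n)` with `g(n) = f(n) C(n) / n^l`,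
where `C(n) = ∑_{k=1}^N cos(2πnk/N) = N·[N ∣ n]`. Since `N` is coprime to `m` and `f(m) = 1`,
`m^l g(mn) = g(n)`, so the part of the series over multiples of `m`, weighted by `m^l`, is again
`∑ g(n)`; as `χ(n) = 1 - m^l [m ∣ n]`, the two contributions cancel.
-/

open Finset Real Complex

lemma sum_Icc_cexp_two_pi_mul_I_mul_div_pow (N n : ℕ) :
    ∑ k ∈ Icc 1 N, cexp (2 * π * I * n / N) ^ k = if N ∣ n then (N : ℂ) else 0 := by
  rcases Nat.eq_zero_or_pos N with rfl | hN
  · simp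
  set z := cexp (2 * π * I * n / N)
  have hsum : ∑ k ∈ Icc 1 N, z ^ k = z * ∑ k ∈ range N, z ^ k := by
    rw [mul_sum, ← Ico_add_one_right_eq_Icc, sum_Ico_eq_sum_range]
    simp [pow_succ', add_comm]
  rw [hsum]
  split_ifs with hdvd
  · simp [z, (exp_two_pi_mul_I_mul_div_eq_one_iff hN.ne').mpr hdvd]
  · have hzN : z ^ N = 1 := by
      rw [← Complex.exp_nat_mul, mul_div_cancel₀ _ (by exact_mod_cast hN.ne'), mul_comm]
      exact Complex.exp_nat_mul_two_pi_mul_I n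
    have hz1 : z ≠ 1 := mt (exp_two_pi_mul_I_mul_div_eq_one_iff hN.ne').mp hdvd
    rw [geom_sum_eq hz1, hzN, sub_self, zero_div, mul_zero]

lemma sum_Icc_cos_two_pi_mul_div (N n : ℕ) :
    ∑ k ∈ Icc 1 N, Real.cos (2 * π * n * k / N) = if N ∣ n then (N : ℝ) else 0 := by
  have h := congrArg Complex.re (sum_Icc_cexp_two_pi_mul_I_mul_div_pow N n)
  rw [re_sum] at h
  convert h using 2 with k
  · rw [← Complex.exp_nat_mul, ← exp_ofReal_mul_I_re]
    push_cast
    ring_nf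
  · split_ifs <;> simp

lemma Summable.mul_of_abs_le {ι : Type*} {a b : ι → ℝ} {C : ℝ} (ha : Summable a)
    (hb : ∀ i, |b i| ≤ C) : Summable fun i => a i * b i :=
  (ha.abs.mul_right C).of_norm_bounded fun i => by
    rw [Real.norm_eq_abs, abs_mul]
    exact mul_le_mul_of_nonneg_left (hb i) (abs_nonneg _)

lemma HasSum.ite_dvd_one_sub_mul {R : Type*} [Ring R] [TopologicalSpace R]
    [IsTopologicalAddGroup R] {m : ℕ+} {c S : R} {g : ℕ+ → R} (hg : HasSum g S)
    (hgm : ∀ n, c * g (m * n) = g n) :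
    HasSum (fun n : ℕ+ => (if (m : ℕ) ∣ n then 1 - c else 1) * g n) 0 := by
  have hmultiples : HasSum (fun n : ℕ+ => if (m : ℕ) ∣ n then c * g n else 0) S := by
    rw [← (mul_right_injective m).hasSum_iff]
    · simpa [Function.comp_def, hgm] using hg
    · intro n hn
      rw [if_neg fun h => hn ((PNat.dvd_iff.mpr h).imp fun j hj => hj.symm)]
  refine sub_self S ▸ (hg.sub hmultiples).congr_fun fun n => ?_
  split_ifs <;> simp [sub_mul]

lemma sum_Icc_tsum_mul_cos_eq_tsum_pnat (N : ℕ) {a : ℕ → ℝ}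
    (ha : Summable fun n : ℕ+ => a n) :
    ∑ k ∈ Icc 1 N, ∑' n : ℕ, a (n + 1) * Real.cos (2 * π * (n + 1 : ℕ) * k / N) =
      ∑' n : ℕ+, a n * if N ∣ n then (N : ℝ) else 0 := by
  have hpnat : ∀ k : ℕ, ∑' n : ℕ, a (n + 1) * Real.cos (2 * π * (n + 1 : ℕ) * k / N) =
      ∑' n : ℕ+, a n * Real.cos (2 * π * n * k / N) := fun k =>
    (tsum_pnat_eq_tsum_succ (f := fun n => a n * Real.cos (2 * π * n * k / N))).symm
  simp_rw [hpnat, ← sum_Icc_cos_two_pi_mul_div, mul_sum]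
  exact (Summable.tsum_finsetSum fun k _ => ha.mul_of_abs_le fun n => abs_cos_le_one _).symm

theorem fine_query_chi_general (m l : ℕ) (hm : 1 < m)
    (χ : ℕ → ℝ) (hχ : ∀ n, χ n = if m ∣ n then -((m : ℝ) ^ l - 1) else 1)
    (f : ℕ → ℝ) (hmul : ∀ a b : ℕ, f (a * b) = f a * f b)
    (hfm : f m = 1)
    (hsum : Summable fun n : ℕ => |f (n + 1)| / (n + 1 : ℝ) ^ l)
    (N : ℕ) (hcop : Nat.Coprime N m) :
    ∑ k ∈ Finset.Icc 1 N,
        ∑' n : ℕ,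
          (χ (n + 1) * f (n + 1) / (n + 1 : ℝ) ^ l) *
            Real.cos (2 * Real.pi * (n + 1) * k / N) = 0 := by
  lift m to ℕ+ using (by omega : 0 < m)
  set g : ℕ → ℝ := fun n => f n / (n : ℝ) ^ l * if N ∣ n then (N : ℝ) else 0
  have hf_div : Summable fun n : ℕ+ => f n / (n : ℝ) ^ l := by
    refine (summable_pnat_iff_summable_succ (f := fun n : ℕ => f n / (n : ℝ) ^ l)).mpr
      (Summable.of_abs (hsum.congr fun n => ?_))
    push_cast
    rw [abs_div, abs_of_pos (by positivity : (0 : ℝ) < ((n : ℝ) + 1) ^ l)]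
  have hχ_abs : ∀ n, |χ n| ≤ (m : ℝ) ^ l := fun n => by
    have hm_pow : (1 : ℝ) ≤ (m : ℝ) ^ l := one_le_pow₀ (by exact_mod_cast hm.le)
    rw [hχ]
    split_ifs
    · rw [abs_neg, abs_of_nonneg (by linarith)]
      linarith
    · rwa [abs_one]
  have hg_mul : ∀ n : ℕ+, (m : ℝ) ^ l * g (m * n : ℕ+) = g n := fun n => by
    simp only [g, PNat.mul_coe, hmul, hfm, hcop.dvd_mul_left, Nat.cast_mul, mul_pow]
    field_simp
  have hg : Summable fun n : ℕ+ => g n :=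
    hf_div.mul_of_abs_le (C := N) fun n => by split_ifs <;> simp
  calc _ = ∑' n : ℕ+, χ n * f n / (n : ℝ) ^ l * if N ∣ n then (N : ℝ) else 0 := by
        simpa using sum_Icc_tsum_mul_cos_eq_tsum_pnat N (a := fun n => χ n * f n / (n : ℝ) ^ l)
          ((hf_div.mul_of_abs_le fun n => hχ_abs n).congr fun n => by ring)
    _ = ∑' n : ℕ+, (if (m : ℕ) ∣ n then 1 - (m : ℝ) ^ l else 1) * g n :=
        tsum_congr fun n => by simp only [hχ, g]; split_ifs <;> ring
    _ = 0 := (hg.hasSum.ite_dvd_one_sub_mul hg_mul).tsum_eq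

theorem fine_query_chi (m l : ℕ) (hm : 1 < m) (hl : 1 < l)
    (χ : ℕ → ℝ) (hχ : ∀ n, χ n = if m ∣ n then -((m : ℝ) ^ l - 1) else 1)
    (f : ℕ → ℝ) (hf1 : f 1 = 1) (hmul : ∀ a b : ℕ, f (a * b) = f a * f b)
    (hfm : f m = 1)
    (hsum : Summable fun n : ℕ => |f (n + 1)| / (n + 1 : ℝ) ^ l)
    (N : ℕ) (hN : 0 < N) (hcop : Nat.Coprime N m) :
    ∑ k ∈ Finset.Icc 1 N,
        ∑' n : ℕ,
          (χ (n + 1) * f (n + 1) / (n + 1 : ℝ) ^ l) *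
            Real.cos (2 * Real.pi * (n + 1) * k / N) = 0 :=
  fine_query_chi_general m l hm χ hχ f hmul hfm hsum N hcop
end
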